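/- A priori best-approximation estimate (Theorem 4.1): let (u, λ) ∈ V × Λ solve the continuous variational inequality and let (u_h, λ_h) ∈ V_h × Λ_h solve the discrete problem. Then there is a constant C > 0, depending only on C_F, ‖G‖ and β, such that for every w_h ∈ V_h and every χ_h ∈ Λ_h one has ‖u − u_h‖_V + ‖div(λ − λ_h)‖₋₁ ≤ C ( ‖u − w_h‖_V + ‖div(λ − χ_h)‖₋₁ + √(⟨G u, λ − χ_h⟩_Q) ), where the quantity ⟨G u, λ − χ_h⟩_Q under the square root is nonnegative because χ_h ∈ Λ. -/
import Mathlib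


open scoped RealInnerProductSpace

/-- The dual seminorm `‖div χ‖₋₁ = sup_{v ≠ 0} ⟨χ, G v⟩ / ‖v‖`. -/
noncomputable def divNorm {V Q : Type*} [NormedAddCommGroup V] [InnerProductSpace ℝ V]
    [NormedAddCommGroup Q] [InnerProductSpace ℝ Q] (G : V →L[ℝ] Q) (χ : Q) : ℝ :=
  ⨆ v : {v : V // v ≠ 0}, ⟪χ, G (v : V)⟫ / ‖(v : V)‖

/-- The discrete supremum `sup_{v_h ∈ V_h, v_h ≠ 0} ⟨χ, G v_h⟩ / ‖v_h‖`. -/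
noncomputable def discSup {V Q : Type*} [NormedAddCommGroup V] [InnerProductSpace ℝ V]
    [NormedAddCommGroup Q] [InnerProductSpace ℝ Q] (G : V →L[ℝ] Q)
    (Vh : Submodule ℝ V) (χ : Q) : ℝ :=
  ⨆ v : {v : V // v ∈ Vh ∧ v ≠ 0}, ⟪χ, G (v : V)⟫ / ‖(v : V)‖

/-- The saddle-point bilinear form `B(w, χ; v, μ)`. -/
noncomputable def saddleB {V Q : Type*} [NormedAddCommGroup V] [InnerProductSpace ℝ V]
    [NormedAddCommGroup Q] [InnerProductSpace ℝ Q] (G : V →L[ℝ] Q)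
    (w : V) (χ : Q) (v : V) (μ : Q) : ℝ :=
  ⟪G w, G v⟫ + ⟪χ, G v⟫ + ⟪μ, G w⟫

section Helpers

variable {V Q : Type*} [NormedAddCommGroup V] [InnerProductSpace ℝ V]
    [NormedAddCommGroup Q] [InnerProductSpace ℝ Q] (G : V →L[ℝ] Q)

private lemma divNorm_bdd (χ : Q) :
    BddAbove (Set.range fun v : {v : V // v ≠ 0} => ⟪χ, G (v : V)⟫ / ‖(v : V)‖) := by
  refine ⟨‖χ‖ * ‖G‖, ?_⟩
  rintro x ⟨v, rfl⟩
  have hv : (0 : ℝ) < ‖(v : V)‖ := norm_pos_iff.2 v.2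
  rw [div_le_iff₀ hv]
  calc ⟪χ, G (v : V)⟫ ≤ ‖χ‖ * ‖G (v : V)‖ := real_inner_le_norm _ _
    _ ≤ ‖χ‖ * (‖G‖ * ‖(v : V)‖) := by
        exact mul_le_mul_of_nonneg_left (G.le_opNorm _) (norm_nonneg _)
    _ = ‖χ‖ * ‖G‖ * ‖(v : V)‖ := by ring

private lemma inner_le_divNorm (χ : Q) (v : V) : ⟪χ, G v⟫ ≤ divNorm G χ * ‖v‖ := by
  by_cases hv : v = 0
  · simp [hv]
  · have h := le_ciSup (divNorm_bdd G χ) (⟨v, hv⟩ : {v : V // v ≠ 0})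
    have hn : (0 : ℝ) < ‖v‖ := norm_pos_iff.2 hv
    rw [div_le_iff₀ hn] at h
    simpa [divNorm, mul_comm] using h

private lemma divNorm_nonneg (χ : Q) : 0 ≤ divNorm G χ := by
  by_cases h : Nonempty {v : V // v ≠ 0}
  · obtain ⟨⟨v, hv⟩⟩ := h
    have h1 := le_ciSup (divNorm_bdd G χ) (⟨v, hv⟩ : {v : V // v ≠ 0})
    have h2 := le_ciSup (divNorm_bdd G χ) (⟨-v, neg_ne_zero.2 hv⟩ : {v : V // v ≠ 0})
    simp only [map_neg, inner_neg_right, norm_neg] at h2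
    unfold divNorm
    by_cases hq : 0 ≤ ⟪χ, G v⟫ / ‖v‖
    · linarith
    · push_neg at hq
      have : 0 ≤ -⟪χ, G v⟫ / ‖v‖ := by
        rw [neg_div]; linarith
      linarith
  · rw [not_nonempty_iff] at h
    exact le_of_eq (Real.iSup_of_isEmpty _).symm

private lemma divNorm_le (χ : Q) (M : ℝ) (hM : 0 ≤ M)
    (h : ∀ v : V, ⟪χ, G v⟫ ≤ M * ‖v‖) : divNorm G χ ≤ M := by
  by_cases hne : Nonempty {v : V // v ≠ 0}
  · refine ciSup_le fun v => ?_
    rw [div_le_iff₀ (norm_pos_iff.2 v.2)]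
    exact h v
  · rw [not_nonempty_iff] at hne
    exact le_of_eq (Real.iSup_of_isEmpty _) |>.trans hM

private lemma discSup_le (Vh : Submodule ℝ V) (χ : Q) (M : ℝ) (hM : 0 ≤ M)
    (h : ∀ v ∈ Vh, ⟪χ, G v⟫ ≤ M * ‖v‖) : discSup G Vh χ ≤ M := by
  by_cases hne : Nonempty {v : V // v ∈ Vh ∧ v ≠ 0}
  · refine ciSup_le fun v => ?_
    rw [div_le_iff₀ (norm_pos_iff.2 v.2.2)]
    exact h v v.2.1
  · rw [not_nonempty_iff] at hne
    exact le_of_eq (Real.iSup_of_isEmpty _) |>.trans hM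

private lemma sqrt_add_le' (x y : ℝ) (hx : 0 ≤ x) (hy : 0 ≤ y) :
    Real.sqrt (x + y) ≤ Real.sqrt x + Real.sqrt y := by
  have h : x + y ≤ (Real.sqrt x + Real.sqrt y) ^ 2 := by
    have h1 := Real.sq_sqrt hx
    have h2 := Real.sq_sqrt hy
    nlinarith [Real.sqrt_nonneg x, Real.sqrt_nonneg y]
  calc Real.sqrt (x + y) ≤ Real.sqrt ((Real.sqrt x + Real.sqrt y) ^ 2) := Real.sqrt_le_sqrt h
    _ = Real.sqrt x + Real.sqrt y := Real.sqrt_sq (by positivity)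

private lemma quad_bound (a K B : ℝ) (ha : 0 ≤ a) (hK : 0 ≤ K) (hB : 0 ≤ B)
    (h : a ^ 2 ≤ K * a + B) : a ≤ K + Real.sqrt B := by
  by_contra hc
  push_neg at hc
  have hs := Real.sq_sqrt hB
  have hsn := Real.sqrt_nonneg B
  nlinarith

end Helpers

/-- A priori best-approximation estimate (Theorem 4.1). -/
theorem apriori_best_approximation
    {V Q : Type*} [NormedAddCommGroup V] [InnerProductSpace ℝ V] [CompleteSpace V]
    [NormedAddCommGroup Q] [InnerProductSpace ℝ Q] [CompleteSpace Q]
    (G : V →L[ℝ] Q) (C_F : ℝ) (hC_F : 0 < C_F)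
    (hFriedrichs : ∀ v : V, ‖v‖ ≤ C_F * ‖G v‖)
    -- continuous problem
    (Λ : Set Q) (hΛ : Λ.Nonempty) (f : V)
    (u : V) (lam : Q) (hlam : lam ∈ Λ)
    (hcont₁ : ∀ v : V, ⟪G u, G v⟫ + ⟪lam, G v⟫ = ⟪f, v⟫)
    (hcont₂ : ∀ μ ∈ Λ, ⟪G u, μ - lam⟫ ≤ 0)
    -- discrete setting
    (Vh : Submodule ℝ V) (Qh : Submodule ℝ Q)
    (hVh : IsClosed (Vh : Set V)) (hQh : IsClosed (Qh : Set Q))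
    (β : ℝ) (hβ : 0 < β)
    (hInfSup : ∀ χh ∈ Qh, β * divNorm G χh ≤ discSup G Vh χh)
    (Λh : Set Q) (hΛh : Λh.Nonempty) (hΛhsub : Λh ⊆ Λ ∩ (Qh : Set Q))
    (uh : V) (huh : uh ∈ Vh) (lamh : Q) (hlamh : lamh ∈ Λh)
    (hdisc : ∀ vh ∈ Vh, ∀ μh ∈ Λh, saddleB G uh lamh vh (μh - lamh) ≤ ⟪f, vh⟫) :
    ∃ C > 0, ∀ wh ∈ Vh, ∀ χh ∈ Λh,
      ‖u - uh‖ + divNorm G (lam - lamh) ≤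
        C * (‖u - wh‖ + divNorm G (lam - χh) + Real.sqrt ⟪G u, lam - χh⟫) := by
  -- notation
  set g : ℝ := ‖G‖ with hg
  have hg0 : 0 ≤ g := norm_nonneg _
  clear_value g
  obtain ⟨hlamhΛ, hlamhQh⟩ := hΛhsub hlamh
  -- discrete equation (equality on the subspace)
  have hdeq : ∀ vh ∈ Vh, ⟪G uh, G vh⟫ + ⟪lamh, G vh⟫ = ⟪f, vh⟫ := by
    intro vh hvh
    have h1 := hdisc vh hvh lamh hlamh
    have h2 := hdisc (-vh) (Vh.neg_mem hvh) lamh hlamh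
    simp only [saddleB, sub_self, inner_zero_left, add_zero, map_neg, inner_neg_right,
      inner_neg_left] at h1 h2 ⊢
    linarith
  -- discrete complementarity
  have hcomp : ∀ μh ∈ Λh, ⟪μh - lamh, G uh⟫ ≤ 0 := by
    intro μh hμh
    have h1 := hdisc 0 Vh.zero_mem μh hμh
    simpa [saddleB] using h1
  -- Galerkin orthogonality
  have hGal : ∀ vh ∈ Vh, ⟪G u - G uh, G vh⟫ + ⟪lam - lamh, G vh⟫ = 0 := by
    intro vh hvh
    have h1 := hcont₁ vh
    have h2 := hdeq vh hvh
    simp only [inner_sub_left]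
    linarith
  -- constants
  set Kc : ℝ := g * (1 + 1 / β) + C_F with hKc
  clear_value Kc
  set Mc : ℝ := 1 + 1 / β with hMc
  have hMc0 : (0 : ℝ) ≤ Mc := by positivity
  clear_value Mc
  have hMc1 : (1 : ℝ) ≤ Mc := by
    have : 0 < 1 / β := by positivity
    simp only [hMc]; linarith
  have hKc0 : 0 ≤ Kc := by
    rw [hKc]
    have := mul_nonneg hg0 hMc0
    nlinarith
  set c1 : ℝ := C_F + g / β with hc1
  have hc10 : 0 ≤ c1 := by positivity
  clear_value c1
  refine ⟨(c1 + 1) * (Kc + Real.sqrt Mc + 1) + Mc, by positivity, ?_⟩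
  intro wh hwh χh hχh
  obtain ⟨hχΛ, hχQh⟩ := hΛhsub hχh
  set a : ℝ := ‖G u - G uh‖ with ha
  have ha0 : 0 ≤ a := norm_nonneg _
  clear_value a
  set P : ℝ := ‖u - wh‖ with hP
  have hP0 : 0 ≤ P := norm_nonneg _
  clear_value P
  set R : ℝ := divNorm G (lam - χh) with hR
  have hR0 : 0 ≤ R := divNorm_nonneg G _
  clear_value R
  set S : ℝ := ⟪G u, lam - χh⟫ with hS
  have hS0 : 0 ≤ S := by
    have h := hcont₂ χh hχΛ
    have heq : ⟪G u, χh - lam⟫ = -S := by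
      rw [hS, inner_sub_right, inner_sub_right]; ring
    rw [heq] at h
    linarith
  set D : ℝ := divNorm G (lam - lamh) with hD
  have hD0 : 0 ≤ D := divNorm_nonneg G _
  clear_value D
  -- Friedrichs for the error
  have hFr : ‖u - uh‖ ≤ C_F * a := by
    rw [ha]
    have := hFriedrichs (u - uh)
    rwa [map_sub] at this
  -- key energy estimate : a^2 ≤ a*g*P + D*P + R*(C_F*a) + S
  have key : a ^ 2 ≤ a * (g * P) + D * P + R * (C_F * a) + S := by
    have e0 : a ^ 2 = ⟪G u - G uh, G u - G uh⟫ := by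
      rw [ha]; exact (real_inner_self_eq_norm_sq _).symm
    have esplit : ⟪G u - G uh, G u - G uh⟫
        = ⟪G u - G uh, G u - G wh⟫ + ⟪G u - G uh, G wh - G uh⟫ := by
      rw [← inner_add_right]
      congr 1
      abel
    have hGalw : ⟪G u - G uh, G wh - G uh⟫ = -⟪lam - lamh, G wh - G uh⟫ := by
      have := hGal (wh - uh) (Vh.sub_mem hwh huh)
      rw [map_sub] at this
      linarith
    have split2 : ⟪lam - lamh, G wh - G uh⟫
        = ⟪lam - lamh, G wh - G u⟫ + ⟪lam - lamh, G u⟫ - ⟪lam - lamh, G uh⟫ := by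
      rw [← inner_add_right, ← inner_sub_right]
      congr 1
      abel
    -- continuous complementarity with μ = lamh
    have hcc : 0 ≤ ⟪lam - lamh, G u⟫ := by
      have := hcont₂ lamh hlamhΛ
      have hsym : ⟪lam - lamh, G u⟫ = ⟪G u, lam - lamh⟫ := real_inner_comm _ _
      have heq : ⟪G u, lam - lamh⟫ = -⟪G u, lamh - lam⟫ := by
        rw [inner_sub_right, inner_sub_right]; ring
      linarith [hsym, heq]
    -- discrete complementarity with μh = χh
    have hdc : ⟪χh - lamh, G uh⟫ ≤ 0 := hcomp χh hχh
    have split3 : ⟪lam - lamh, G uh⟫ = ⟪lam - χh, G uh⟫ + ⟪χh - lamh, G uh⟫ := by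
      rw [← inner_add_left]
      congr 1
      abel
    have split4 : ⟪lam - χh, G uh⟫ = ⟪lam - χh, G uh - G u⟫ + S := by
      have hsym : ⟪G u, lam - χh⟫ = ⟪lam - χh, G u⟫ := real_inner_comm _ _
      rw [hS, hsym, ← inner_add_right]
      congr 1
      abel
    have b1 : ⟪lam - χh, G uh - G u⟫ ≤ R * (C_F * a) := by
      have h1 : ⟪lam - χh, G (uh - u)⟫ ≤ R * ‖uh - u‖ := by
        rw [hR]; exact inner_le_divNorm G _ _
      rw [map_sub] at h1
      have h2 : ‖uh - u‖ ≤ C_F * a := by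
        rw [norm_sub_rev]; exact hFr
      calc ⟪lam - χh, G uh - G u⟫ ≤ R * ‖uh - u‖ := h1
        _ ≤ R * (C_F * a) := mul_le_mul_of_nonneg_left h2 hR0
    have b2 : ⟪G u - G uh, G u - G wh⟫ ≤ a * (g * P) := by
      have hcs : ⟪G u - G uh, G u - G wh⟫ ≤ a * ‖G u - G wh‖ := by
        rw [ha]; exact real_inner_le_norm _ _
      have hop : ‖G u - G wh‖ ≤ g * P := by
        rw [hg, hP]
        have := G.le_opNorm (u - wh)
        rwa [map_sub] at this
      calc ⟪G u - G uh, G u - G wh⟫ ≤ a * ‖G u - G wh‖ := hcs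
        _ ≤ a * (g * P) := mul_le_mul_of_nonneg_left hop ha0
    have b3 : ⟪lam - lamh, G u - G wh⟫ ≤ D * P := by
      rw [hD, hP]
      have := inner_le_divNorm G (lam - lamh) (u - wh)
      rwa [map_sub] at this
    have b3' : -⟪lam - lamh, G wh - G u⟫ ≤ D * P := by
      have heq : -⟪lam - lamh, G wh - G u⟫ = ⟪lam - lamh, G u - G wh⟫ := by
        rw [← inner_neg_right]
        congr 1
        abel
      rw [heq]; exact b3
    linarith only [e0, esplit, hGalw, split2, split3, split4, b1, b2, b3', hcc, hdc]
  -- inf-sup bound : D ≤ R + (R + g * a) / β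
  have hDb : D ≤ R + (R + g * a) / β := by
    have hsub : χh - lamh ∈ Qh := Qh.sub_mem hχQh hlamhQh
    have hIS := hInfSup _ hsub
    have hds : discSup G Vh (χh - lamh) ≤ R + g * a := by
      refine discSup_le G Vh _ _ (add_nonneg hR0 (mul_nonneg hg0 ha0)) ?_
      intro vh hvh
      have h1 : ⟪lam - lamh, G vh⟫ = -⟪G u - G uh, G vh⟫ := by
        have := hGal vh hvh; linarith
      have h2 : ⟪χh - lamh, G vh⟫ = ⟪χh - lam, G vh⟫ + ⟪lam - lamh, G vh⟫ := by
        rw [← inner_add_left]; congr 1; abel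
      have h3 : ⟪χh - lam, G vh⟫ ≤ R * ‖vh‖ := by
        rw [hR]
        have := inner_le_divNorm G (lam - χh) (-vh)
        rw [map_neg, inner_neg_right, norm_neg] at this
        have heq : ⟪χh - lam, G vh⟫ = -⟪lam - χh, G vh⟫ := by
          rw [← inner_neg_left]; congr 1; abel
        rw [heq]
        linarith
      have h4 : -⟪G u - G uh, G vh⟫ ≤ g * a * ‖vh‖ := by
        have hcs : ⟪G uh - G u, G vh⟫ ≤ ‖G uh - G u‖ * ‖G vh‖ := real_inner_le_norm _ _
        have hnn : ‖G uh - G u‖ = a := by rw [ha, norm_sub_rev]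
        have hgop : ∀ x, ‖G x‖ ≤ g * ‖x‖ := by
          intro x; rw [hg]; exact G.le_opNorm x
        have hop : ‖G vh‖ ≤ g * ‖vh‖ := hgop vh
        have heq : -⟪G u - G uh, G vh⟫ = ⟪G uh - G u, G vh⟫ := by
          rw [← inner_neg_left]; congr 1; abel
        rw [heq]
        calc ⟪G uh - G u, G vh⟫ ≤ ‖G uh - G u‖ * ‖G vh‖ := hcs
          _ = a * ‖G vh‖ := by rw [hnn]
          _ ≤ a * (g * ‖vh‖) := mul_le_mul_of_nonneg_left hop ha0
          _ = g * a * ‖vh‖ := by ring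
      calc ⟪χh - lamh, G vh⟫ = ⟪χh - lam, G vh⟫ + ⟪lam - lamh, G vh⟫ := h2
        _ ≤ R * ‖vh‖ + g * a * ‖vh‖ := by rw [h1]; linarith
        _ = (R + g * a) * ‖vh‖ := by ring
    have htri : D ≤ R + divNorm G (χh - lamh) := by
      rw [hD]
      refine divNorm_le G _ _ (add_nonneg hR0 (divNorm_nonneg G (χh - lamh))) ?_
      intro v
      have h1 : ⟪lam - lamh, G v⟫ = ⟪lam - χh, G v⟫ + ⟪χh - lamh, G v⟫ := by
        rw [← inner_add_left]; congr 1; abel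
      have h2 : ⟪lam - χh, G v⟫ ≤ R * ‖v‖ := by
        rw [hR]; exact inner_le_divNorm G (lam - χh) v
      have h3 := inner_le_divNorm G (χh - lamh) v
      rw [h1]
      nlinarith [norm_nonneg v]
    have hdn : divNorm G (χh - lamh) ≤ (R + g * a) / β := by
      rw [le_div_iff₀ hβ]
      calc divNorm G (χh - lamh) * β = β * divNorm G (χh - lamh) := by ring
        _ ≤ discSup G Vh (χh - lamh) := hIS
        _ ≤ R + g * a := hds
    linarith
  -- quadratic bound on a
  have ht : (1:ℝ)/β = Mc - 1 := by rw [hMc]; ring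
  have habound : a ≤ Kc * (P + R) + Real.sqrt Mc * (P + R) + Real.sqrt Mc * Real.sqrt S := by
    have hq : a ^ 2 ≤ (Kc * (P + R)) * a + (Mc * (P + R) ^ 2 + Mc * S) := by
      have hDP : D * P ≤ (R + (R + g * a) / β) * P :=
        mul_le_mul_of_nonneg_right hDb hP0
      have hexp : (R + (R + g * a) / β) * P
          = R * P + (Mc - 1) * (R * P) + (Mc - 1) * (g * a * P) := by
        rw [← ht]
        field_simp
        ring
      have keyc : a ^ 2 ≤ a * (g * P) + R * P + (Mc - 1) * (R * P)
          + (Mc - 1) * (g * a * P) + R * (C_F * a) + S := by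
        linarith only [key, hDP, hexp]
      rw [hKc]
      have h1 : 0 ≤ g * (Mc * (R * a)) :=
        mul_nonneg hg0 (mul_nonneg hMc0 (mul_nonneg hR0 ha0))
      have h2 : 0 ≤ C_F * (P * a) := mul_nonneg hC_F.le (mul_nonneg hP0 ha0)
      have h3 : 0 ≤ Mc * (P ^ 2 + P * R + R ^ 2) :=
        mul_nonneg hMc0 (add_nonneg (add_nonneg (sq_nonneg P) (mul_nonneg hP0 hR0)) (sq_nonneg R))
      have h4 : S ≤ Mc * S := le_mul_of_one_le_left hS0 hMc1
      linarith only [keyc, h1, h2, h3, h4]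
    have hB0 : 0 ≤ Mc * (P + R) ^ 2 + Mc * S :=
      add_nonneg (mul_nonneg hMc0 (sq_nonneg _)) (mul_nonneg hMc0 hS0)
    have hK0 : 0 ≤ Kc * (P + R) := mul_nonneg hKc0 (add_nonneg hP0 hR0)
    have hqb := quad_bound a (Kc * (P + R)) (Mc * (P + R) ^ 2 + Mc * S) ha0 hK0 hB0 hq
    have hsq : Real.sqrt (Mc * (P + R) ^ 2 + Mc * S)
        ≤ Real.sqrt Mc * (P + R) + Real.sqrt Mc * Real.sqrt S := by
      calc Real.sqrt (Mc * (P + R) ^ 2 + Mc * S)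
          ≤ Real.sqrt (Mc * (P + R) ^ 2) + Real.sqrt (Mc * S) :=
            sqrt_add_le' _ _ (mul_nonneg hMc0 (sq_nonneg _)) (mul_nonneg hMc0 hS0)
        _ = Real.sqrt Mc * (P + R) + Real.sqrt Mc * Real.sqrt S := by
            rw [Real.sqrt_mul hMc0, Real.sqrt_mul hMc0,
              Real.sqrt_sq (add_nonneg hP0 hR0)]
    linarith
  -- conclusion
  have hFr' : ‖u - uh‖ ≤ C_F * a := hFr
  have hDb' : D ≤ Mc * R + g / β * a := by
    have hexp2 : R + (R + g * a) / β = Mc * R + g / β * a := by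
      rw [hMc]
      field_simp
      ring
    linarith [hDb, hexp2]
  have hfin : ‖u - uh‖ + D ≤ c1 * a + Mc * R := by
    rw [hc1]
    have : (C_F + g / β) * a = C_F * a + g / β * a := by ring
    linarith [hFr', hDb', this]
  have hsMc : 0 ≤ Real.sqrt Mc := Real.sqrt_nonneg _
  have hsS : 0 ≤ Real.sqrt S := Real.sqrt_nonneg _
  have hstep : c1 * a + Mc * R
      ≤ c1 * (Kc * (P + R) + Real.sqrt Mc * (P + R) + Real.sqrt Mc * Real.sqrt S) + Mc * R := by
    have := mul_le_mul_of_nonneg_left habound hc10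
    linarith
  have hlast : c1 * (Kc * (P + R) + Real.sqrt Mc * (P + R) + Real.sqrt Mc * Real.sqrt S) + Mc * R
      ≤ ((c1 + 1) * (Kc + Real.sqrt Mc + 1) + Mc) * (P + R + Real.sqrt S) := by
    have j1 : 0 ≤ c1 * Kc * Real.sqrt S := mul_nonneg (mul_nonneg hc10 hKc0) hsS
    have j2 : 0 ≤ Mc * (P + Real.sqrt S) := mul_nonneg hMc0 (add_nonneg hP0 hsS)
    have j3 : 0 ≤ (c1 + Kc + Real.sqrt Mc + 1) * (P + R + Real.sqrt S) := by
      have : 0 ≤ c1 + Kc + Real.sqrt Mc + 1 := by linarith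
      exact mul_nonneg this (by linarith)
    linarith only [j1, j2, j3]
  linarith [hfin, hstep, hlast]
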